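/- arXiv:math/0611312 — 5 statements merged into one kernel-verified Lean document; each statement's English description precedes it below -/
import Mathlib

section
/- Let B₁, …, Bₙ (or an arbitrary family Bᵢ, i ∈ I) be finite-dimensional k-algebras and let A* = ∏ᵢ Bᵢ. Then the subset { b ∈ A* : dim_k (A*·b) < ∞ } equals the direct sum ⊕ᵢ Bᵢ ⊆ ∏ᵢ Bᵢ. -/
/-!
The left ideal `A*·b` contains `Pi.single i 1 * b = Pi.single i (b i)` for every `i`, and these
elements are linearly independent over the support of `b`; so a finite-dimensional `A*·b` forces
finite support. Conversely, every `a * b` vanishes outside the support of `b`, and the functions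
vanishing outside a finite set `s` form the finite-dimensional space `⨆ i ∈ s, range (single i)`.
-/

section

variable {k ι : Type*} {M : ι → Type*} [DivisionRing k] [∀ i, AddCommGroup (M i)]
  [∀ i, Module k (M i)]

theorem Pi.linearIndepOn_single_setOf_ne_zero [DecidableEq ι] (v : ∀ i, M i) :
    LinearIndepOn k (fun i ↦ Pi.single i (v i)) {i | v i ≠ 0} :=
  (linearIndependent_equiv (Equiv.sigmaPLiftEquivSubtype _)).mp <|
    Pi.linearIndependent_single (fun i (_ : PLift (v i ≠ 0)) ↦ v i) fun _ ↦
      (linearIndependent_subsingleton_index_iff _).mpr fun h ↦ h.down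

theorem Submodule.finite_setOf_ne_zero_of_single_mem [DecidableEq ι] {p : Submodule k (∀ i, M i)}
    [FiniteDimensional k p] {v : ∀ i, M i} (hv : ∀ i, Pi.single i (v i) ∈ p) :
    {i | v i ≠ 0}.Finite :=
  Set.finite_coe_iff.mp <| LinearIndependent.finite <|
    LinearIndependent.of_comp p.subtype (v := fun i ↦ ⟨Pi.single (i : ι) (v i), hv i⟩)
      (Pi.linearIndepOn_single_setOf_ne_zero v).linearIndependent

theorem Submodule.finiteDimensional_span_of_forall_eq_zero [∀ i, FiniteDimensional k (M i)]
    {s : Set ι} (hs : s.Finite) {S : Set (∀ i, M i)} (hS : ∀ x ∈ S, ∀ i ∉ s, x i = 0) :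
    FiniteDimensional k (span k S) := by
  classical
  have : Finite s := hs
  have hle : span k S ≤ ⨆ i ∈ s, LinearMap.range (LinearMap.single k M i) :=
    le_trans (span_le.mpr fun x hx ↦ by simpa using hS x hx)
      (LinearMap.iInf_ker_proj_le_iSup_range_single k M hs isCompl_compl.codisjoint)
  -- the instance `Submodule.finite_iSup` needs a finite index type, not `ι` with `i ∈ s`
  rw [iSup_subtype'] at hle
  exact finiteDimensional_of_le hle

end

/-- For a family `(Bᵢ)` of finite-dimensional algebras over a field `k`
and `A* = ∏ᵢ Bᵢ`, the set of `b ∈ A*` such that the left ideal `A*·b`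
(equivalently, its underlying `k`-vector space, spanned by `{a * b : a ∈ A*}`)
is finite-dimensional over `k` is exactly the direct sum `⊕ᵢ Bᵢ`, i.e. the set
of elements of finite support. -/
theorem stmt_1 (k : Type*) [Field k] {I : Type*} (B : I → Type*)
    [∀ i, Ring (B i)] [∀ i, Algebra k (B i)] [∀ i, FiniteDimensional k (B i)] :
    {b : ∀ i, B i |
      FiniteDimensional k (Submodule.span k {x : ∀ i, B i | ∃ a : ∀ i, B i, x = a * b})} =
    {b : ∀ i, B i | Set.Finite {i | b i ≠ 0}} := by
  classical
  ext b
  refine ⟨fun (_ : FiniteDimensional k _) ↦ ?_, fun hb ↦ ?_⟩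
  · have hsingle (i : I) :
        Pi.single i (b i) ∈ Submodule.span k {x : ∀ i, B i | ∃ a : ∀ i, B i, x = a * b} :=
      Submodule.subset_span ⟨Pi.single i 1, by rw [← Pi.single_mul_left, one_mul]⟩
    exact Submodule.finite_setOf_ne_zero_of_single_mem hsingle
  · refine Submodule.finiteDimensional_span_of_forall_eq_zero hb fun _ ⟨a, hx⟩ i hi ↦ ?_
    rw [hx, Pi.mul_apply, of_not_not hi, mul_zero]
end

section
/- Let k be a field of characteristic 0 and E an n-dimensional k-vector space. The ring of polynomial functions on End_k(E) invariant under the action of SL(E) (acting by left multiplication, i.e. (g·f)(T) = f(g⁻¹T)) is the polynomial subring k[det] generated by the determinant function. -/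
/-!
Invariance under `SL_n(k)` is a polynomial identity, so it persists over any field `F ⊇ k`: for
a transvection `t_ij(c)` with `c ∈ F`, the map `c ↦ f(t_ij(c) Y)` is a polynomial in `c` that is
constant on the infinite set `k`, hence constant. Transvections generate `SL_n(F)`, so
`f(MY) = f(Y)` for every `M ∈ SL_n(F)`. Over `F = k(x_ij)` the generic matrix `X` factors as
`M · diag(det X, 1, …, 1)` with `det M = 1`, whence `f(X) = f(diag(det X, 1, …, 1))`, a
polynomial in `det X`. Conversely `det(gX) = det X` for `g ∈ SL_n(k)`.
-/

open Matrix MvPolynomial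

namespace Matrix

variable {n : Type*} [DecidableEq n]

theorem map_transvection {R S F : Type*} [CommRing R] [CommRing S] [FunLike F R S]
    [RingHomClass F R S] (f : F) (i j : n) (c : R) :
    (transvection i j c).map f = transvection i j (f c) := by
  ext p q
  simp only [transvection, map_apply, add_apply, one_apply, single_apply]
  split_ifs <;> simp

variable [Fintype n]
variable {K : Type*} [Field K]

theorem diagonal_mulSingle_mul_mulSingle_inv {i j : n} (hij : i ≠ j) {a : K} (ha : a ≠ 0) :
    diagonal (Pi.mulSingle i a * Pi.mulSingle j a⁻¹) =
      transvection i j a * transvection j i (-a⁻¹) * transvection i j a *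
        (transvection i j (-1) * transvection j i 1 * transvection i j (-1)) := by
  ext p q
  simp only [Matrix.mul_assoc]
  rcases eq_or_ne p i with rfl | hpi
  · simp only [diagonal_apply, Pi.mul_apply, Pi.mulSingle_eq_same, ne_eq, hij, not_false_eq_true,
      Pi.mulSingle_eq_of_ne, mul_one, transvection_mul_apply_same, transvection_mul_apply_of_ne,
      one_mul, neg_mul, neg_add_rev, add_neg_cancel_left,
      transvection_mul_apply_of_ne _ _ _ _ hij.symm]
    simp only [transvection, add_apply, one_apply, single_apply]
    rcases eq_or_ne p q with hpq | hpq <;> rcases eq_or_ne j q with hjq | hjq <;>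
      simp_all
  rcases eq_or_ne p j with rfl | hpj
  · simp only [diagonal_apply, Pi.mul_apply, ne_eq, hij.symm, not_false_eq_true,
      Pi.mulSingle_eq_of_ne, Pi.mulSingle_eq_same, one_mul, transvection_mul_apply_of_ne,
      transvection_mul_apply_same, transvection_mul_apply_of_ne _ _ _ _ hij, neg_mul, neg_add_rev,
      add_neg_cancel_left]
    simp only [transvection, add_apply, one_apply, single_apply]
    rcases eq_or_ne p q with hpq | hpq <;> rcases eq_or_ne i q with hiq | hiq <;>
      simp_all
  · simp only [transvection_mul_apply_of_ne _ _ _ _ hpi, transvection_mul_apply_of_ne _ _ _ _ hpj]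
    simp [diagonal_apply, hpi.symm, hpj, transvection, one_apply]

variable (n K) in
def transvectionSubmonoid : Submonoid (Matrix n n K) :=
  Submonoid.closure (Set.range TransvectionStruct.toMatrix)

theorem transvection_mem_transvectionSubmonoid {i j : n} (hij : i ≠ j) (c : K) :
    transvection i j c ∈ transvectionSubmonoid n K :=
  Submonoid.subset_closure ⟨⟨i, j, hij, c⟩, rfl⟩

theorem diagonal_mem_transvectionSubmonoid {d : n → K} (hd : ∏ i, d i = 1) :
    diagonal d ∈ transvectionSubmonoid n K := by
  rcases isEmpty_or_nonempty n with hn | ⟨⟨i₀⟩⟩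
  · simp [Subsingleton.elim (diagonal d) 1, one_mem]
  have hd₀ : ∀ i, d i ≠ 0 := fun i h => by
    simp [Finset.prod_eq_zero (Finset.mem_univ i) h] at hd
  let S := (transvectionSubmonoid n K).comap (diagonalRingHom n K : (n → K) →* Matrix n n K)
  have hpair : ∀ i, Pi.mulSingle i (d i) * Pi.mulSingle i₀ (d i)⁻¹ ∈ S := by
    intro i
    rcases eq_or_ne i i₀ with rfl | hi
    · simp [← Pi.mulSingle_mul, mul_inv_cancel₀ (hd₀ i), one_mem]
    · show diagonal (Pi.mulSingle i (d i) * Pi.mulSingle i₀ (d i)⁻¹) ∈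
        transvectionSubmonoid n K
      rw [diagonal_mulSingle_mul_mulSingle_inv hi (hd₀ i)]
      refine mul_mem (mul_mem (mul_mem ?_ ?_) ?_) (mul_mem (mul_mem ?_ ?_) ?_) <;>
        exact transvection_mem_transvectionSubmonoid (by first | exact hi | exact hi.symm) _
  have hprod : d = ∏ i, (Pi.mulSingle i (d i) * Pi.mulSingle i₀ (d i)⁻¹) := by
    ext l
    rcases eq_or_ne l i₀ with rfl | hl
    · simp [Finset.prod_apply, Finset.prod_mul_distrib, Finset.prod_inv_distrib, hd]
    · simp [Finset.prod_apply, hl]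
  exact hprod ▸ prod_mem fun i _ => hpair i

theorem mem_transvectionSubmonoid_of_det_eq_one {M : Matrix n n K} (hM : M.det = 1) :
    M ∈ transvectionSubmonoid n K :=
  diagonal_transvection_induction (· ∈ transvectionSubmonoid n K) M
    (fun d hd => diagonal_mem_transvectionSubmonoid (by rwa [hM, det_diagonal] at hd))
    (fun t => Submonoid.subset_closure ⟨t, rfl⟩) (fun _ _ => mul_mem)

end Matrix

namespace MvPolynomial

variable {k m n : Type*}

section CommSemiring

variable [CommSemiring k] {A B : Type*} [CommSemiring A] [CommSemiring B] [Algebra k A]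
  [Algebra k B]

noncomputable def evalMatrix (f : MvPolynomial (m × n) k) (Y : Matrix m n A) : A :=
  aeval (fun p : m × n => Y p.1 p.2) f

theorem map_evalMatrix (φ : A →ₐ[k] B) (f : MvPolynomial (m × n) k) (Y : Matrix m n A) :
    φ (f.evalMatrix Y) = f.evalMatrix (Y.map φ) :=
  comp_aeval_apply _ φ f

theorem evalMatrix_mvPolynomialX (f : MvPolynomial (m × n) k) :
    f.evalMatrix (mvPolynomialX m n k) = f :=
  aeval_X_left_apply f

variable [Fintype m] [DecidableEq m]

def leftMulStabilizer (f : MvPolynomial (m × n) k) (A : Type*) [CommSemiring A] [Algebra k A] :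
    Submonoid (Matrix m m A) where
  carrier := {M | ∀ Y : Matrix m n A, f.evalMatrix (M * Y) = f.evalMatrix Y}
  mul_mem' {M N} hM hN Y := by simp only [Matrix.mul_assoc, hM _, hN _]
  one_mem' Y := by rw [Matrix.one_mul]

theorem map_mem_leftMulStabilizer {f : MvPolynomial (m × n) k} {g : Matrix m m k}
    (hg : f.evalMatrix (g.map (algebraMap k (MvPolynomial (m × n) k)) * mvPolynomialX m n k) =
      f) :
    g.map (algebraMap k A) ∈ leftMulStabilizer f A := by
  intro Y
  have hmap : (g.map (algebraMap k (MvPolynomial (m × n) k)) * mvPolynomialX m n k).map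
      (aeval fun p : m × n => Y p.1 p.2) = g.map (algebraMap k A) * Y := by
    rw [Matrix.map_mul, Matrix.map_map]
    congr 1 <;> ext <;> simp
  rw [← hmap, ← map_evalMatrix, hg]
  rfl

end CommSemiring

section CommRing

variable [CommRing k] [Fintype m] [DecidableEq m]

theorem evalMatrix_det_mvPolynomialX {A : Type*} [CommRing A] [Algebra k A] (Y : Matrix m m A) :
    (mvPolynomialX m m k).det.evalMatrix Y = Y.det := by
  rw [evalMatrix, AlgHom.map_det, mvPolynomialX_mapMatrix_aeval]

def IsLeftSLInvariant (f : MvPolynomial (m × n) k) : Prop :=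
  ∀ g : Matrix.SpecialLinearGroup m k,
    f.evalMatrix ((g : Matrix m m k).map (algebraMap k (MvPolynomial (m × n) k)) *
      mvPolynomialX m n k) = f

theorem isLeftSLInvariant_of_mem_adjoin_det {f : MvPolynomial (m × m) k}
    (hf : f ∈ Algebra.adjoin k {(mvPolynomialX m m k).det}) : f.IsLeftSLInvariant := by
  intro g
  have hg : ((g : Matrix m m k).map (algebraMap k (MvPolynomial (m × m) k))).det = 1 := by
    rw [← RingHom.mapMatrix_apply, ← RingHom.map_det, g.prop, map_one]
  have hdet : (mvPolynomialX m m k).det ∈ AlgHom.equalizer (aeval fun p : m × m =>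
      ((g : Matrix m m k).map (algebraMap k (MvPolynomial (m × m) k)) * mvPolynomialX m m k)
        p.1 p.2) (AlgHom.id k _) := by
    show (mvPolynomialX m m k).det.evalMatrix _ = _
    rw [evalMatrix_det_mvPolynomialX, det_mul, hg, one_mul, AlgHom.id_apply]
  exact Algebra.adjoin_le (Set.singleton_subset_iff.mpr hdet) hf

end CommRing

section Field

variable [Field k] [Infinite k] [Fintype m] [DecidableEq m] {f : MvPolynomial (m × n) k}

theorem transvection_mem_leftMulStabilizer {A : Type*} [CommRing A] [IsDomain A]
    [Algebra k A] {i j : m}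
    (h : ∀ c : k, transvection i j (algebraMap k A c) ∈ leftMulStabilizer f A) (c : A) :
    transvection i j c ∈ leftMulStabilizer f A := by
  intro Y
  let P : Polynomial A :=
    f.evalMatrix (transvection i j (Polynomial.X : Polynomial A) * Y.map Polynomial.C)
  have hP : ∀ c : A, P.eval c = f.evalMatrix (transvection i j c * Y) := by
    intro c
    rw [← Polynomial.coe_aeval_eq_eval, ← AlgHom.restrictScalars_apply k, map_evalMatrix,
      Matrix.map_mul, Matrix.map_transvection, Matrix.map_map]
    simp [Function.comp_def]
  have hconst : P = Polynomial.C (f.evalMatrix Y) := by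
    apply Polynomial.eq_of_infinite_eval_eq
    refine (Set.infinite_range_of_injective (algebraMap k A).injective).mono ?_
    rintro _ ⟨c, rfl⟩
    simp [hP, h c Y]
  rw [← hP, hconst, Polynomial.eval_C]

theorem IsLeftSLInvariant.mem_leftMulStabilizer {F : Type*} [Field F] [Algebra k F]
    (hf : f.IsLeftSLInvariant) {M : Matrix m m F} (hM : M.det = 1) :
    M ∈ leftMulStabilizer f F := by
  refine Submonoid.closure_le.mpr ?_ (mem_transvectionSubmonoid_of_det_eq_one hM)
  rintro _ ⟨t, rfl⟩
  refine transvection_mem_leftMulStabilizer (fun c => ?_) t.c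
  rw [← map_transvection]
  exact map_mem_leftMulStabilizer (hf ⟨_, det_transvection_of_ne _ _ t.hij c⟩)

theorem IsLeftSLInvariant.evalMatrix_eq_evalMatrix_diagonal {F : Type*} [Field F]
    [Algebra k F] {f : MvPolynomial (m × m) k} (hf : f.IsLeftSLInvariant) (i₀ : m)
    {Y : Matrix m m F} (hY : Y.det ≠ 0) :
    f.evalMatrix Y = f.evalMatrix (diagonal (Pi.mulSingle i₀ Y.det)) := by
  set D := diagonal (Pi.mulSingle i₀ Y.det)
  have hD : D.det = Y.det := by simp [D, det_diagonal, Finset.prod_pi_mulSingle']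
  have hYD : Y * D⁻¹ * D = Y := by
    rw [Matrix.mul_assoc, nonsing_inv_mul _ (by simpa [hD] using hY.isUnit), Matrix.mul_one]
  have hdet : (Y * D⁻¹).det = 1 := by
    rw [det_mul, det_nonsing_inv, hD, Ring.inverse_eq_inv, mul_inv_cancel₀ hY]
  rw [← (hf.mem_leftMulStabilizer hdet) D, hYD]

theorem IsLeftSLInvariant.mem_adjoin_det {f : MvPolynomial (m × m) k}
    (hf : f.IsLeftSLInvariant) : f ∈ Algebra.adjoin k {(mvPolynomialX m m k).det} := by
  rcases isEmpty_or_nonempty m with hm | ⟨⟨i₀⟩⟩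
  · obtain ⟨c, rfl⟩ := C_surjective (m × m) f
    exact Subalgebra.algebraMap_mem _ c
  let R := MvPolynomial (m × m) k
  let ι : R →ₐ[k] FractionRing R := IsScalarTower.toAlgHom k R (FractionRing R)
  have hι : Function.Injective ι := IsFractionRing.injective R (FractionRing R)
  set δ := (mvPolynomialX m m k).det
  have hdet : ((mvPolynomialX m m k).map ι).det = ι δ := (AlgHom.map_det ι _).symm
  have hδ : ι δ ≠ 0 := (map_ne_zero_iff ι hι).mpr (det_mvPolynomialX_ne_zero m k)
  have hdiag : (diagonal (Pi.mulSingle i₀ δ)).map ι = diagonal (Pi.mulSingle i₀ (ι δ)) := by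
    ext p q
    simp only [map_apply, diagonal_apply, Pi.mulSingle_apply]
    split_ifs <;> simp
  have hf_eq : f = f.evalMatrix (diagonal (Pi.mulSingle i₀ δ)) := hι <| by
    rw [map_evalMatrix, hdiag, ← hdet,
      ← hf.evalMatrix_eq_evalMatrix_diagonal i₀ (hdet ▸ hδ), ← map_evalMatrix,
      evalMatrix_mvPolynomialX]
  rw [hf_eq, evalMatrix]
  refine Algebra.adjoin_le ?_ (by rw [← aeval_range]; exact AlgHom.mem_range_self _ f)
  rintro _ ⟨⟨p, q⟩, rfl⟩
  simp only [diagonal_apply, Pi.mulSingle_apply]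
  split_ifs
  exacts [Algebra.subset_adjoin rfl, one_mem _, zero_mem _]

end Field

end MvPolynomial

/-- First fundamental theorem for `SL_n` acting by left
multiplication on `n×n` matrices: a polynomial function `f` on `M_n` (i.e.
`f ∈ k[x_{11},…,x_{nn}]`, char `k = 0`) satisfies `f(g·T) = f(T)` for all
`g ∈ SL_n(k)` if and only if `f` is a polynomial in the determinant, i.e.
`k[x_{ij}]^{SL_n} = k[det(x_{ij})]`. -/
theorem stmt_10 (k : Type*) [Field k] [CharZero k] (n : ℕ)
    (f : MvPolynomial (Fin n × Fin n) k) :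
    (∀ g : Matrix.SpecialLinearGroup (Fin n) k,
      MvPolynomial.aeval
        (fun q : Fin n × Fin n =>
          ∑ l : Fin n, MvPolynomial.C (g.val q.1 l) * MvPolynomial.X (l, q.2)) f = f) ↔
    f ∈ Algebra.adjoin k {(Matrix.of fun i j : Fin n => MvPolynomial.X (i, j)).det} :=
  -- the left-hand side is `f.IsLeftSLInvariant` unfolded, as `(g.map C * X) i j` is
  -- `∑ l, C (g i l) * X (l, j)` by definition
  ⟨IsLeftSLInvariant.mem_adjoin_det, isLeftSLInvariant_of_mem_adjoin_det⟩
end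

section
/- Let k be a field of characteristic 0, E an n-dimensional vector space, and let SL(E) act diagonally on E^{⊗n}, g·(v₁⊗…⊗vₙ) = gv₁⊗…⊗gvₙ. Then the space of SL(E)-invariants (E^{⊗n})^{SL(E)} is the image of Λⁿ E under the antisymmetrization map, i.e. it is the one-dimensional space spanned by Σ_{σ∈Sₙ} sgn(σ) e_{σ(1)}⊗…⊗e_{σ(n)} for a basis e₁,…,eₙ of E. -/
/-! Write an invariant tensor `x` in the basis `b f₁ ⊗ … ⊗ b fₙ` (`f : ι → ι`) of the tensor
power. Invariance under a monomial map `b j ↦ s j • b (τ j)` of determinant one relates the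
coordinates at `f` and at `τ ∘ f`. If `f` misses `j₀`, the diagonal map with entries `2⁻¹` at `j₀`
and `2` at `f j₀` scales the coordinate at `f` by a power `2 ^ m ≠ 1` with `m ≥ 1`, so only
permutations carry nonzero coordinates; the monomial map with `τ = σ` and `s = sign σ` at one
place shows that the coordinate at `σ` is `sign σ` times the one at the identity. Conversely,
every alternating map in `dim E` variables is a multiple of the determinant, so the tensor power
of `g` multiplies the antisymmetrization of `b` by `det g`. -/

open scoped TensorProduct

open Module PiTensorProduct

namespace AlternatingMap

variable {R M N ι : Type*} [CommRing R] [AddCommGroup M] [Module R M] [AddCommGroup N]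
  [Module R N] [Fintype ι] [DecidableEq ι]

theorem eq_basis_det_smul (e : Basis ι R M) (F : M [⋀^ι]→ₗ[R] N) (v : ι → M) :
    F v = e.det v • F e := by
  suffices h : F = e.det.smulRight (F e) from DFunLike.congr_fun h v
  refine e.ext_alternating fun i hi => ?_
  let σ := Equiv.ofBijective i (Finite.injective_iff_bijective.1 hi)
  change F (e ∘ σ) = e.det.smulRight (F e) (e ∘ σ)
  simp [map_perm, Basis.det_self]

theorem apply_linearMap_comp_basis (e : Basis ι R M) (F : M [⋀^ι]→ₗ[R] N)
    (g : M →ₗ[R] M) :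
    F (g ∘ e) = LinearMap.det g • F e := by
  rw [F.eq_basis_det_smul e, e.det_comp, e.det_self, mul_one]

end AlternatingMap

theorem Module.Basis.repr_apply_of_map_basis_eq_smul {R M κ : Type*} [CommSemiring R]
    [AddCommMonoid M] [Module R M] (B : Basis κ R M) {L : M →ₗ[R] M} {π : κ → κ}
    (hπ : π.Injective) {w : κ → R} (hL : ∀ i, L (B i) = w i • B (π i)) (x : M) (i : κ) :
    B.repr (L x) (π i) = w i * B.repr x i := by
  have : B.coord (π i) ∘ₗ L = w i • B.coord i := B.ext fun j => by
    by_cases h : j = i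
    · simp [hL, h]
    · simp [hL, h, hπ.ne h]
  exact LinearMap.congr_fun this x

namespace Module.Basis

variable {R M ι : Type*} [CommRing R] [AddCommGroup M] [Module R M] (b : Basis ι R M)

noncomputable def monomialEnd (s : ι → R) (τ : Equiv.Perm ι) : M →ₗ[R] M :=
  b.constr R fun j => s j • b (τ j)

@[simp]
theorem monomialEnd_apply_basis (s : ι → R) (τ : Equiv.Perm ι) (j : ι) :
    b.monomialEnd s τ (b j) = s j • b (τ j) :=
  b.constr_basis R _ j

variable [Fintype ι]

theorem det_monomialEnd [DecidableEq ι] (s : ι → R) (τ : Equiv.Perm ι) :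
    LinearMap.det (b.monomialEnd s τ) = Equiv.Perm.sign τ * ∏ j, s j := by
  rw [← mul_one (LinearMap.det _), ← b.det_self, ← b.det_comp]
  have : ⇑(b.monomialEnd s τ) ∘ b = fun j => s j • (b ∘ τ) j := by
    ext j; simp
  rw [this, b.det.map_smul_univ, b.det.map_perm, b.det_self,
    Units.smul_def, zsmul_eq_mul, smul_eq_mul, mul_one, mul_comm]

theorem map_monomialEnd_piTensorProduct (s : ι → R) (τ : Equiv.Perm ι) (f : ι → ι) :
    map (fun _ => b.monomialEnd s τ) (Basis.piTensorProduct (fun _ : ι => b) f)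
      = (∏ i, s (f i)) • Basis.piTensorProduct (fun _ : ι => b) (τ ∘ f) := by
  simp [MultilinearMap.map_smul_univ]

theorem repr_map_monomialEnd (s : ι → R) (τ : Equiv.Perm ι) (x : ⨂[R] _ : ι, M)
    (f : ι → ι) :
    (Basis.piTensorProduct (fun _ : ι => b)).repr (map (fun _ => b.monomialEnd s τ) x) (τ ∘ f)
      = (∏ i, s (f i)) * (Basis.piTensorProduct (fun _ : ι => b)).repr x f :=
  Basis.repr_apply_of_map_basis_eq_smul _ τ.injective.comp_left
    (b.map_monomialEnd_piTensorProduct s τ) x f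

end Module.Basis

namespace PiTensorProduct

section CommRing

variable {R M ι : Type*} [CommRing R] [AddCommGroup M] [Module R M] [Fintype ι]
  [DecidableEq ι]

def IsSLInvariant (x : ⨂[R] _ : ι, M) : Prop :=
  ∀ g : M →ₗ[R] M, LinearMap.det g = 1 → map (fun _ => g) x = x

theorem alternatization_tprod_apply (v : ι → M) :
    MultilinearMap.alternatization (tprod R) v
      = ∑ σ : Equiv.Perm ι, (Equiv.Perm.sign σ : ℤ) • tprod R (fun i => v (σ i)) := by
  simp [MultilinearMap.alternatization_apply, Units.smul_def]

theorem map_alternatization_tprod (g : M →ₗ[R] M) (v : ι → M) :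
    map (fun _ => g) (MultilinearMap.alternatization (tprod R) v)
      = MultilinearMap.alternatization (tprod R) (g ∘ v) := by
  simp only [MultilinearMap.alternatization_apply, map_sum, map_zsmul_unit,
    MultilinearMap.domDomCongr_apply, map_tprod, Function.comp_apply]

theorem isSLInvariant_alternatization_tprod_basis (b : Basis ι R M) :
    IsSLInvariant (MultilinearMap.alternatization (tprod R) b) := fun g hg => by
  rw [map_alternatization_tprod, AlternatingMap.apply_linearMap_comp_basis, hg, one_smul]

variable (b : Basis ι R M) {x : ⨂[R] _ : ι, M}

theorem IsSLInvariant.repr_comp (hx : IsSLInvariant x) {s : ι → R} {τ : Equiv.Perm ι}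
    (hsτ : Equiv.Perm.sign τ * ∏ j, s j = 1) (f : ι → ι) :
    (Basis.piTensorProduct (fun _ : ι => b)).repr x (τ ∘ f)
      = (∏ i, s (f i)) * (Basis.piTensorProduct (fun _ : ι => b)).repr x f := by
  rw [← b.repr_map_monomialEnd, hx _ (by rw [b.det_monomialEnd, hsτ])]

theorem IsSLInvariant.repr_perm (hx : IsSLInvariant x) (σ : Equiv.Perm ι) :
    (Basis.piTensorProduct (fun _ : ι => b)).repr x σ
      = Equiv.Perm.sign σ * (Basis.piTensorProduct (fun _ : ι => b)).repr x id := by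
  cases isEmpty_or_nonempty ι
  · simp [Subsingleton.elim σ 1]
  obtain ⟨a⟩ := ‹Nonempty ι›
  have hsσ : Equiv.Perm.sign σ * ∏ j, Pi.mulSingle a (Equiv.Perm.sign σ : R) j = 1 := by
    rw [Fintype.prod_pi_mulSingle', ← Int.cast_mul, ← Units.val_mul, Int.units_mul_self]
    simp
  simpa [Fintype.prod_pi_mulSingle'] using hx.repr_comp b hsσ id

end CommRing

section Field

variable {k E ι : Type*} [Field k] [CharZero k] [AddCommGroup E] [Module k E] [Fintype ι]
  [DecidableEq ι] (b : Basis ι k E) {x : ⨂[k] _ : ι, E}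

theorem IsSLInvariant.repr_eq_zero_of_not_bijective (hx : IsSLInvariant x) {f : ι → ι}
    (hf : ¬ f.Bijective) : (Basis.piTensorProduct (fun _ : ι => b)).repr x f = 0 := by
  obtain ⟨j₀, hj₀⟩ : ∃ j₀, ∀ i, f i ≠ j₀ := by
    simpa [Function.Surjective] using mt Finite.surjective_iff_bijective.1 hf
  set s : ι → k := Pi.mulSingle j₀ 2⁻¹ * Pi.mulSingle (f j₀) 2
  have hs : Equiv.Perm.sign (1 : Equiv.Perm ι) * ∏ j, s j = 1 := by
    simp [s, Finset.prod_mul_distrib]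
  have hsf : ∏ i, s (f i) = 2 ^ (Finset.univ.filter (f · = f j₀)).card := by
    simp [s, Pi.mulSingle_apply, hj₀, Finset.prod_ite]
  have hsf_ne : ∏ i, s (f i) ≠ 1 := by
    have hpos : 0 < (Finset.univ.filter (f · = f j₀)).card :=
      Finset.card_pos.2 ⟨j₀, by simp⟩
    rw [hsf]
    exact_mod_cast (Nat.one_lt_two_pow hpos.ne').ne'
  have := hx.repr_comp b hs f
  rw [Equiv.Perm.coe_one, Function.id_comp] at this
  exact (mul_left_eq_self₀.1 this.symm).resolve_left hsf_ne

theorem IsSLInvariant.eq_smul_alternatization (hx : IsSLInvariant x) :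
    x = (Basis.piTensorProduct (fun _ : ι => b)).repr x id
      • MultilinearMap.alternatization (tprod k) b := by
  set B := Basis.piTensorProduct (fun _ : ι => b)
  calc x = ∑ f, B.repr x f • B f := (B.sum_repr x).symm
    _ = ∑ σ : Equiv.Perm ι, B.repr x σ • B σ := by
      refine (Fintype.sum_of_injective _ DFunLike.coe_injective _ _ (fun f hf => ?_)
        fun σ => rfl).symm
      rw [hx.repr_eq_zero_of_not_bijective b fun hf' => hf ⟨Equiv.ofBijective f hf', rfl⟩,
        zero_smul]
    _ = _ := by
      rw [alternatization_tprod_apply, Finset.smul_sum]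
      refine Finset.sum_congr rfl fun σ _ => ?_
      rw [hx.repr_perm b, mul_smul, smul_comm, Int.cast_smul_eq_zsmul,
        Basis.piTensorProduct_apply]

theorem isSLInvariant_iff_mem_span_alternatization :
    IsSLInvariant x ↔ x ∈ Submodule.span k {MultilinearMap.alternatization (tprod k) b} := by
  refine ⟨fun hx => Submodule.mem_span_singleton.2 ⟨_, (hx.eq_smul_alternatization b).symm⟩,
    fun hx g hg => ?_⟩
  obtain ⟨a, rfl⟩ := Submodule.mem_span_singleton.1 hx
  rw [map_smul, isSLInvariant_alternatization_tprod_basis b g hg]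

end Field

end PiTensorProduct

theorem stmt_11_general (k E : Type*) [Field k] [CharZero k] [AddCommGroup E] [Module k E]
    (n : ℕ) (b : Module.Basis (Fin n) k E) :
    {x : ⨂[k] _ : Fin n, E | ∀ g : E →ₗ[k] E, LinearMap.det g = 1 →
        PiTensorProduct.map (fun _ => g) x = x} =
      ↑(Submodule.span k
        {∑ σ : Equiv.Perm (Fin n),
          (Equiv.Perm.sign σ : ℤ) • PiTensorProduct.tprod k fun i => b (σ i)}) := by
  ext x
  rw [← PiTensorProduct.alternatization_tprod_apply]
  exact PiTensorProduct.isSLInvariant_iff_mem_span_alternatization b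

/-- char `k = 0`, `E` an `n`-dimensional vector space, `SL(E)` acting
diagonally on `E^{⊗n}`.  The space of invariants `(E^{⊗n})^{SL(E)}` is the span of
the antisymmetrized tensor `Σ_{σ∈Sₙ} sgn(σ) e_{σ(1)}⊗…⊗e_{σ(n)}` for a basis
`e₁,…,eₙ` of `E` (the image of `Λⁿ E`). -/
theorem stmt_11 (k E : Type*) [Field k] [CharZero k] [AddCommGroup E] [Module k E]
    [FiniteDimensional k E] (n : ℕ) (hn : Module.finrank k E = n)
    (b : Module.Basis (Fin n) k E) :
    {x : ⨂[k] _ : Fin n, E | ∀ g : E →ₗ[k] E, LinearMap.det g = 1 →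
        PiTensorProduct.map (fun _ => g) x = x} =
      ↑(Submodule.span k
        {∑ σ : Equiv.Perm (Fin n),
          (Equiv.Perm.sign σ : ℤ) • PiTensorProduct.tprod k fun i => b (σ i)}) :=
  stmt_11_general k E n b
end

section
/- Let k be a field of characteristic 0, E an n-dimensional vector space, and m a positive integer not divisible by n. Then (E^{⊗m})^{SL(E)} = 0, i.e. the diagonal SL(E)-action on E^{⊗m} has no nonzero invariants. -/
/-!
Fix a basis `b` of `E`. The tensors `b (f 1) ⊗ ⋯ ⊗ b (f m)` form a basis of `E^{⊗m}`, and the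
diagonal map `diag d` (with `∏ d = 1`, so it lies in `SL(E)`) scales the one indexed by `f` by
`∏ l, d (f l)`. An invariant tensor therefore has zero coefficient at `f` as soon as some such `d`
gives `∏ l, d (f l) ≠ 1`. Since `n ∤ m`, the fibres of `f : Fin m → Fin n` cannot all have the
same size, say `#f⁻¹ i ≠ #f⁻¹ j`, and `d = 2` at `i`, `1/2` at `j`, `1` elsewhere works because
`2` has infinite order in characteristic zero.
-/

open scoped TensorProduct
open Finset PiTensorProduct

section Combinatorics

variable {σ ι : Type*} [Fintype σ] [Fintype ι] [DecidableEq ι]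

theorem exists_card_fiber_ne_of_not_dvd (f : σ → ι)
    (h : ¬ Fintype.card ι ∣ Fintype.card σ) :
    ∃ i j, #{l | f l = i} ≠ #{l | f l = j} := by
  by_contra! hconst
  refine h ?_
  have hsum : Fintype.card σ = ∑ t, #{l | f l = t} :=
    card_eq_sum_card_fiberwise fun l _ => mem_univ (f l)
  rw [hsum]
  cases isEmpty_or_nonempty σ with
  | inl _ => simp
  | inr hσ =>
    obtain ⟨l₀⟩ := hσ
    rw [sum_congr rfl fun t _ => hconst t (f l₀), sum_const, card_univ, smul_eq_mul]
    exact dvd_mul_right _ _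

theorem exists_prod_eq_one_and_prod_comp_ne_one (k : Type*) [Field k] [CharZero k]
    (f : σ → ι) (h : ¬ Fintype.card ι ∣ Fintype.card σ) :
    ∃ d : ι → k, ∏ t, d t = 1 ∧ ∏ l, d (f l) ≠ 1 := by
  obtain ⟨i, j, hij⟩ := exists_card_fiber_ne_of_not_dvd f h
  refine ⟨fun t => 2 ^ (if t = i then 1 else 0) * 2⁻¹ ^ (if t = j then 1 else 0), ?_, ?_⟩
  · rw [prod_mul_distrib, prod_pow_eq_pow_sum, prod_pow_eq_pow_sum]
    simp
  · rw [prod_mul_distrib, prod_pow_eq_pow_sum, prod_pow_eq_pow_sum, sum_boole, sum_boole,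
      Nat.cast_id, Nat.cast_id, inv_pow, Ne, mul_inv_eq_one₀ (pow_ne_zero _ two_ne_zero)]
    exact fun h2 => hij (Nat.pow_right_injective le_rfl (by exact_mod_cast h2))

end Combinatorics

section DiagonalAction

variable {R E ι σ : Type*} [CommRing R] [AddCommGroup E] [Module R E]
  [Fintype ι] [DecidableEq ι] [Fintype σ]

theorem Module.Basis.repr_toLin_diagonal (b : Module.Basis ι R E) (d : ι → R) (v : E) (t : ι) :
    b.repr (Matrix.toLin b b (Matrix.diagonal d) v) t = d t * b.repr v t := by
  rw [Matrix.toLin_apply, b.repr_sum_self, Matrix.mulVec_diagonal]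

theorem Basis.piTensorProduct_repr_map_toLin_diagonal (b : Module.Basis ι R E)
    (d : ι → R) (x : ⨂[R] _ : σ, E) (f : σ → ι) :
    (Basis.piTensorProduct fun _ => b).repr
        (PiTensorProduct.map (fun _ => Matrix.toLin b b (Matrix.diagonal d)) x) f =
      (∏ l, d (f l)) * (Basis.piTensorProduct fun _ => b).repr x f := by
  induction x using PiTensorProduct.induction_on with
  | smul_tprod r v =>
    simp only [map_smul, map_tprod, Finsupp.smul_apply, Basis.piTensorProduct_repr_tprod_apply,
      b.repr_toLin_diagonal, prod_mul_distrib, smul_eq_mul]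
    ring
  | add x y hx hy =>
    rw [map_add, map_add, Finsupp.add_apply, hx, hy, map_add, Finsupp.add_apply, mul_add]

theorem Basis.piTensorProduct_repr_eq_zero_of_map_toLin_diagonal_eq [IsDomain R]
    (b : Module.Basis ι R E) {d : ι → R} {x : ⨂[R] _ : σ, E} {f : σ → ι}
    (hx : PiTensorProduct.map (fun _ => Matrix.toLin b b (Matrix.diagonal d)) x = x)
    (hf : ∏ l, d (f l) ≠ 1) :
    (Basis.piTensorProduct fun _ => b).repr x f = 0 := by
  have h := Basis.piTensorProduct_repr_map_toLin_diagonal b d x f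
  rw [hx, eq_comm, mul_left_eq_self₀] at h
  exact h.resolve_left hf

end DiagonalAction

theorem stmt_12_general (k E : Type*) [Field k] [CharZero k] [AddCommGroup E] [Module k E]
    [FiniteDimensional k E] (n m : ℕ) (hn : Module.finrank k E = n)
    (hnm : ¬ n ∣ m) :
    {x : ⨂[k] _ : Fin m, E | ∀ g : E →ₗ[k] E, LinearMap.det g = 1 →
        PiTensorProduct.map (fun _ => g) x = x} = {0} := by
  let b := Module.finBasisOfFinrankEq k E hn
  refine Set.eq_singleton_iff_unique_mem.mpr ⟨fun g _ => map_zero _, fun x hx => ?_⟩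
  refine (Basis.piTensorProduct fun _ => b).ext_elem fun f => ?_
  obtain ⟨d, hdet, hf⟩ := exists_prod_eq_one_and_prod_comp_ne_one k f (by simpa using hnm)
  have hfixed := hx (Matrix.toLin b b (Matrix.diagonal d))
    (by rw [LinearMap.det_toLin, Matrix.det_diagonal, hdet])
  rw [map_zero, Finsupp.zero_apply]
  exact Basis.piTensorProduct_repr_eq_zero_of_map_toLin_diagonal_eq b hfixed hf

/-- char `k = 0`, `E` an `n`-dimensional vector space, `m` a positive
integer not divisible by `n`.  The diagonal `SL(E)`-action on `E^{⊗m}` has no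
nonzero invariants: `(E^{⊗m})^{SL(E)} = 0`. -/
theorem stmt_12 (k E : Type*) [Field k] [CharZero k] [AddCommGroup E] [Module k E]
    [FiniteDimensional k E] (n m : ℕ) (hn : Module.finrank k E = n)
    (hm : 0 < m) (hnm : ¬ n ∣ m) :
    {x : ⨂[k] _ : Fin m, E | ∀ g : E →ₗ[k] E, LinearMap.det g = 1 →
        PiTensorProduct.map (fun _ => g) x = x} = {0} :=
  stmt_12_general k E n m hn hnm
end

section
/- Let k be an infinite field of characteristic 0 and E an n-dimensional vector space. The image of the group-algebra map k[S_m] → End_k(E^{⊗m}), σ ↦ σ̃ (permutation of tensor factors), equals the subalgebra of GL(E)-invariants (End_k(E)^{⊗m})^{GL(E)} = End_{GL(E)}(E^{⊗m}) (Schur–Weyl duality, surjectivity half). -/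
/-!
An endomorphism commuting with every `g^{⊗m}`, `g ∈ GL(E)`, also commutes with every `a^{⊗m}`,
`a ∈ End(E)`: `t ↦ (t + a)^{⊗m}` is polynomial in `t`, `t + a` is invertible for all but
finitely many `t`, and `k` is infinite. By polarization the `a^{⊗m}` span the `S_m`-invariants
of `End(E)^{⊗m} = End(E^{⊗m})`, which (averaging over `S_m`, as `m! ≠ 0`) form the commutant of
the permutation operators. Hence such an endomorphism lies in the double commutant of the image
of `S_m`, and by Maschke's theorem and the Jacobson density theorem this double commutant is
spanned by the permutation operators.
-/

open Module Finset
open scoped TensorProduct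

theorem Finset.sum_superset_neg_one_pow_card_compl {ι : Type*} [Fintype ι] [DecidableEq ι]
    (T : Finset ι) :
    ∑ S : Finset ι, (if T ⊆ S then (-1 : ℤ) ^ #Sᶜ else 0) = if T = univ then 1 else 0 := by
  calc ∑ S : Finset ι, (if T ⊆ S then (-1 : ℤ) ^ #Sᶜ else 0)
      = ∑ U : Finset ι, (if U ⊆ Tᶜ then (-1 : ℤ) ^ #U else 0) :=
        Fintype.sum_equiv (Equiv.mk compl compl compl_compl compl_compl) _ _ fun S => by simp
    _ = if T = univ then 1 else 0 := by
        rw [← sum_filter, filter_subset_univ, sum_powerset_neg_one_pow_card]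
        simp only [compl_eq_empty_iff]

namespace MultilinearMap

section Polarization

variable {R ι M N : Type*} [CommSemiring R] [AddCommGroup M] [Module R M] [AddCommGroup N]
  [Module R N] [Fintype ι] [DecidableEq ι]

/-- Expanding the right-hand side gives `F (a ∘ r)` for every `r : ι → ι`, and inclusion–exclusion
over the image of `r` leaves exactly the surjective `r`. -/
theorem sum_perm_apply_comp (F : MultilinearMap R (fun _ : ι => M) N) (a : ι → M) :
    ∑ σ : Equiv.Perm ι, F (a ∘ σ) =
      ∑ S : Finset ι, (-1 : ℤ) ^ #Sᶜ • F (fun _ => ∑ i ∈ S, a i) := by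
  have hsurj : ∀ r : ι → ι, ∑ S : Finset ι, (if univ.image r ⊆ S then (-1 : ℤ) ^ #Sᶜ else 0)
      = if Function.Surjective r then 1 else 0 := by
    intro r
    simp only [Finset.sum_superset_neg_one_pow_card_compl, ← coe_eq_univ, coe_image, coe_univ,
      Set.image_univ, Set.range_eq_univ]
  symm
  calc ∑ S : Finset ι, (-1 : ℤ) ^ #Sᶜ • F (fun _ => ∑ i ∈ S, a i)
      = ∑ S : Finset ι, ∑ r : ι → ι,
          (if univ.image r ⊆ S then (-1 : ℤ) ^ #Sᶜ else 0) • F (a ∘ r) := by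
        refine sum_congr rfl fun S _ => ?_
        have hS : Fintype.piFinset (fun _ : ι => S) = univ.filter (fun r => univ.image r ⊆ S) := by
          ext r; simp [Fintype.mem_piFinset, image_subset_iff]
        simp_rw [ite_smul, zero_smul, ← sum_filter, ← hS, F.map_sum_finset (fun _ => a), smul_sum]
        rfl
    _ = ∑ r : ι → ι, (if Function.Surjective r then F (a ∘ r) else 0) := by
        rw [sum_comm]
        simp_rw [← sum_smul, hsurj, ite_smul, one_smul, zero_smul]
    _ = ∑ σ : Equiv.Perm ι, F (a ∘ σ) := by
        rw [← sum_filter]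
        refine (sum_bij (fun (σ : Equiv.Perm ι) _ => ⇑σ) (fun σ _ => by simpa using σ.surjective)
          (fun σ _ τ _ h => Equiv.coe_fn_injective h) (fun r hr => ?_) fun _ _ => rfl).symm
        have hr : Function.Bijective r := Finite.surjective_iff_bijective.mp (by simpa using hr)
        exact ⟨Equiv.ofBijective r hr, mem_univ _, rfl⟩

end Polarization

variable {K ι M N : Type*} [Field K] [AddCommGroup M] [Module K M] [AddCommGroup N]
  [Module K N] [Fintype ι] [DecidableEq ι]

/-- `t ↦ F (fun _ => t • y + x)` is polynomial in `t`, with constant term `F (fun _ => x)`. -/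
theorem map_const_mem_of_infinite (F : MultilinearMap K (fun _ : ι => M) N) {p : Submodule K N}
    {x y : M} (h : {t : K | F (fun _ => t • y + x) ∈ p}.Infinite) : F (fun _ => x) ∈ p := by
  have expand : ∀ t : K, F (fun _ => t • y + x) =
      ∑ S : Finset ι, t ^ #S • F (S.piecewise (fun _ => y) (fun _ => x)) := by
    intro t
    rw [show (fun _ => t • y + x) = (fun _ : ι => t • y) + (fun _ => x) from rfl, F.map_add_univ]
    refine sum_congr rfl fun S _ => ?_
    rw [← prod_const, ← F.map_piecewise_smul]
    congr 1
    ext i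
    by_cases hi : i ∈ S <;> simp [hi]
  rw [← Submodule.Quotient.mk_eq_zero, ← Module.forall_dual_apply_eq_zero_iff K]
  intro φ
  let ψ := φ ∘ₗ p.mkQ
  let q : Polynomial K := ∑ S : Finset ι,
    Polynomial.C (ψ (F (S.piecewise (fun _ => y) (fun _ => x)))) * Polynomial.X ^ #S
  have hq : ∀ t, q.eval t = ψ (F fun _ => t • y + x) := by
    intro t
    rw [expand, _root_.map_sum, Polynomial.eval_finsetSum]
    refine sum_congr rfl fun S _ => ?_
    rw [map_smul, Polynomial.eval_mul, Polynomial.eval_C, Polynomial.eval_pow, Polynomial.eval_X,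
      smul_eq_mul, mul_comm]
  have hq0 : q = 0 := Polynomial.eq_zero_of_infinite_isRoot q <| h.mono fun t ht => by
    simp [Polynomial.IsRoot, hq, ψ, (Submodule.Quotient.mk_eq_zero p).mpr ht]
  simpa [hq0, ψ] using (hq 0).symm

end MultilinearMap

theorem Module.Basis.piTensorProduct_end_apply {R ι : Type*} [CommRing R] [Fintype ι]
    [DecidableEq ι] {s κ : ι → Type*} [∀ i, AddCommGroup (s i)] [∀ i, Module R (s i)]
    [∀ i, Fintype (κ i)] [∀ i, DecidableEq (κ i)] (b : ∀ i, Basis (κ i) R (s i))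
    (I J : ∀ i, κ i) :
    (Basis.piTensorProduct b).end (I, J) = PiTensorProduct.map fun i => (b i).end (I i, J i) := by
  refine (Basis.piTensorProduct b).ext fun K => ?_
  rw [Basis.end_apply_apply]
  simp only [Basis.piTensorProduct_apply, PiTensorProduct.map_tprod, Basis.end_apply_apply]
  split_ifs with h
  · subst h; simp
  · obtain ⟨i, hi⟩ := Function.ne_iff.mp h
    exact ((PiTensorProduct.tprod R).map_coord_zero i (by simp [hi])).symm

namespace PiTensorProduct

theorem span_range_map_eq_top {R ι : Type*} [CommRing R] [Fintype ι] [DecidableEq ι]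
    {s : ι → Type*} [∀ i, AddCommGroup (s i)] [∀ i, Module R (s i)] [∀ i, Module.Free R (s i)]
    [∀ i, Module.Finite R (s i)] :
    Submodule.span R (Set.range fun f : ∀ i, End R (s i) => map f) = ⊤ := by
  classical
  let b i := Module.Free.chooseBasis R (s i)
  rw [eq_top_iff, ← (Basis.piTensorProduct b).end.span_eq, Submodule.span_le]
  rintro _ ⟨⟨I, J⟩, rfl⟩
  exact Submodule.subset_span ⟨_, (Basis.piTensorProduct_end_apply b I J).symm⟩

section Permutations

variable (R ι M : Type*) [CommSemiring R] [AddCommMonoid M] [Module R M]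

noncomputable def permRep : Representation R (Equiv.Perm ι) (⨂[R] _ : ι, M) where
  toFun σ := (reindex R (fun _ => M) σ).toLinearMap
  map_one' := by
    ext
    simp only [LinearMap.compMultilinearMap_apply, LinearEquiv.coe_coe, reindex_tprod]
    rfl
  map_mul' σ τ := by
    ext
    simp only [LinearMap.compMultilinearMap_apply, LinearEquiv.coe_coe, reindex_tprod,
      Module.End.mul_apply]
    rfl

variable {R ι M}

@[simp]
theorem permRep_tprod (σ : Equiv.Perm ι) (f : ι → M) :
    permRep R ι M σ (tprod R f) = tprod R fun i => f (σ⁻¹ i) :=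
  reindex_tprod σ f

theorem permRep_mul_map (σ : Equiv.Perm ι) (a : ι → End R M) :
    permRep R ι M σ * map a = map (fun i => a (σ⁻¹ i)) * permRep R ι M σ :=
  (map_comp_reindex_eq a σ).symm

end Permutations

section CommRing

variable {R ι M : Type*} [CommRing R] [Fintype ι] [DecidableEq ι] [AddCommGroup M] [Module R M]

theorem sum_permRep_mul_map_mul_inv_mem_span (a : ι → End R M) :
    ∑ σ : Equiv.Perm ι, permRep R ι M σ * map a * permRep R ι M σ⁻¹ ∈
      Submodule.span R (Set.range fun b : End R M => map fun _ : ι => b) := by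
  have hconj : ∀ σ : Equiv.Perm ι,
      permRep R ι M σ * map a * permRep R ι M σ⁻¹ = map (a ∘ ⇑σ⁻¹) := by
    intro σ
    rw [permRep_mul_map, mul_assoc, ← map_mul, mul_inv_cancel, map_one, mul_one]
    rfl
  simp_rw [hconj]
  rw [Fintype.sum_equiv (Equiv.inv _) (fun σ : Equiv.Perm ι => map (a ∘ ⇑σ⁻¹))
    (fun σ => map (a ∘ ⇑σ)) fun _ => rfl]
  have := (mapMultilinear R (fun _ : ι => M) (fun _ => M)).sum_perm_apply_comp a
  simp only [mapMultilinear_apply] at this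
  rw [this]
  exact Submodule.sum_mem _ fun S _ =>
    Submodule.smul_of_tower_mem _ _ (Submodule.subset_span ⟨_, rfl⟩)

end CommRing

variable {k ι E : Type*} [Field k] [Fintype ι] [DecidableEq ι] [AddCommGroup E] [Module k E]

theorem mem_span_map_const_of_forall_commute [NeZero (Nat.card (Equiv.Perm ι) : k)]
    [FiniteDimensional k E]
    {f : End k (⨂[k] _ : ι, E)} (hf : ∀ σ, Commute f (permRep k ι E σ)) :
    f ∈ Submodule.span k (Set.range fun b : End k E => map fun _ : ι => b) := by
  let ρ := permRep k ι E
  let T : End k (⨂[k] _ : ι, E) →ₗ[k] End k (⨂[k] _ : ι, E) :=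
    ∑ σ, LinearMap.mulLeft k (ρ σ) ∘ₗ LinearMap.mulRight k (ρ σ⁻¹)
  have hT : ∀ g, T g = ∑ σ, ρ σ * g * ρ σ⁻¹ := by simp [T, mul_assoc]
  have hTspan : ∀ g, T g ∈ Submodule.span k (Set.range fun b : End k E => map fun _ : ι => b) := by
    have : Submodule.span k (Set.range fun a : ι → End k E => map a) ≤
        (Submodule.span k (Set.range fun b : End k E => map fun _ : ι => b)).comap T :=
      Submodule.span_le.mpr <| Set.range_subset_iff.mpr fun a => by
        simpa only [SetLike.mem_coe, Submodule.mem_comap, hT] using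
          sum_permRep_mul_map_mul_inv_mem_span a
    rw [span_range_map_eq_top (s := fun _ : ι => E)] at this
    exact fun g => this (Submodule.mem_top (x := g))
  have hTf : T f = (Nat.card (Equiv.Perm ι) : k) • f := by
    rw [hT, Nat.cast_smul_eq_nsmul, Nat.card_eq_fintype_card, ← card_univ, ← sum_const]
    refine sum_congr rfl fun σ _ => ?_
    rw [← (hf σ).eq, mul_assoc, ← map_mul, mul_inv_cancel, map_one, mul_one]
  have := hTspan f
  rwa [hTf, Submodule.smul_mem_iff _ (NeZero.ne _)] at this

theorem map_const_mem_span_range_linearEquiv [Infinite k] [FiniteDimensional k E] (a : End k E) :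
    map (fun _ : ι => a) ∈
      Submodule.span k (Set.range fun g : E ≃ₗ[k] E => map fun _ : ι => g.toLinearMap) := by
  refine (mapMultilinear k (fun _ : ι => E) (fun _ => E)).map_const_mem_of_infinite (y := 1) ?_
  refine (End.finite_spectrum (-a)).infinite_compl.mono fun t ht => ?_
  obtain ⟨u, hu⟩ := spectrum.notMem_iff.mp ht
  refine Submodule.subset_span ⟨LinearMap.GeneralLinearGroup.generalLinearEquiv k E u, ?_⟩
  dsimp only [mapMultilinear_apply]
  rw [LinearMap.GeneralLinearGroup.generalLinearEquiv_to_linearMap, hu,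
    Algebra.algebraMap_eq_smul_one, sub_neg_eq_add]
  rfl

end PiTensorProduct

namespace Representation

variable {k G V : Type*} [Field k] [Group G] [AddCommGroup V] [Module k V]

theorem asAlgebraHom_mem_span_range (ρ : Representation k G V) (r : MonoidAlgebra k G) :
    ρ.asAlgebraHom r ∈ Submodule.span k (Set.range ρ) := by
  induction r using MonoidAlgebra.induction_linear with
  | zero => simp
  | add r s hr hs => simpa using add_mem hr hs
  | single g c =>
    rw [asAlgebraHom_single]
    exact Submodule.smul_mem _ c (Submodule.subset_span ⟨g, rfl⟩)

/-- Double centralizer theorem, from Maschke's theorem and the Jacobson density theorem. -/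
theorem mem_span_range_of_forall_commute [Finite G] [NeZero (Nat.card G : k)]
    [FiniteDimensional k V] (ρ : Representation k G V) {A : End k V}
    (hA : ∀ f : End k V, (∀ g, Commute f (ρ g)) → Commute A f) :
    A ∈ Submodule.span k (Set.range ρ) := by
  let R := MonoidAlgebra k G
  let e := ρ.asModuleEquiv
  have : Module.Finite (End R ρ.asModule) ρ.asModule := .of_restrictScalars_finite k _ _
  let Â : End (End R ρ.asModule) ρ.asModule :=
    { toFun := fun x => e.symm (A (e x))
      map_add' := by simp
      map_smul' := fun φ x => by
        have hφ : Commute A (e.conj (φ.restrictScalars k)) := by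
          refine hA _ fun g => LinearMap.ext fun v => ?_
          simp only [LinearEquiv.conj_apply, LinearMap.comp_apply, LinearEquiv.coe_coe,
            LinearMap.coe_restrictScalars, Module.End.mul_apply, e, asModuleEquiv_symm_map_rho,
            map_smul, asModuleEquiv_map_smul, asAlgebraHom_of]
        simpa [LinearEquiv.conj_apply] using congr(e.symm ($hφ (e x))) }
  obtain ⟨r, hr⟩ := Module.Finite.toModuleEnd_moduleEnd_surjective Â
  convert ρ.asAlgebraHom_mem_span_range r
  ext v
  calc A v = e (Â (e.symm v)) := by simp [Â]
    _ = e (r • e.symm v) := by rw [← hr]; rfl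
    _ = ρ.asAlgebraHom r v := by rw [asModuleEquiv_map_smul, e.apply_symm_apply]

end Representation

/-- Schur–Weyl duality (surjectivity half).  `k` an (infinite) field
of characteristic `0`, `E` an `n`-dimensional vector space, `GL(E)` acting
diagonally on `E^{⊗m}` and `S_m` acting by permuting tensor factors (operators
`P σ` with `P σ (e₁⊗…⊗e_m) = e_{σ(1)}⊗…⊗e_{σ(m)}`).  The commutant
`End_{GL(E)}(E^{⊗m})` — the endomorphisms commuting with every `g ∈ GL(E)` —
equals the span of the permutation operators `P σ`, `σ ∈ S_m`. -/
theorem stmt_19 (k E : Type*) [Field k] [CharZero k] [AddCommGroup E] [Module k E]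
    [FiniteDimensional k E] (m : ℕ)
    (P : Equiv.Perm (Fin m) → Module.End k (⨂[k] _ : Fin m, E))
    (hP : ∀ (σ : Equiv.Perm (Fin m)) (f : Fin m → E),
      P σ (PiTensorProduct.tprod k f) = PiTensorProduct.tprod k fun i => f (σ i)) :
    {A : Module.End k (⨂[k] _ : Fin m, E) |
      ∀ g : E ≃ₗ[k] E,
        A ∘ₗ PiTensorProduct.map (fun _ => g.toLinearMap) =
          PiTensorProduct.map (fun _ => g.toLinearMap) ∘ₗ A} =
      ↑(Submodule.span k (Set.range P)) := by
  let ρ := PiTensorProduct.permRep k (Fin m) E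
  have hPρ : P = fun σ => ρ σ⁻¹ :=
    funext fun σ => PiTensorProduct.ext <| MultilinearMap.ext fun f => by simp [ρ, hP]
  have hrange : Set.range P = Set.range ρ := hPρ ▸ (Equiv.inv _).surjective.range_comp ρ
  rw [hrange]
  ext A
  constructor
  · intro hA
    refine ρ.mem_span_range_of_forall_commute fun f hf => ?_
    refine Commute.span_right (Set.forall_mem_range.mpr fun a => ?_) f
      (PiTensorProduct.mem_span_map_const_of_forall_commute hf)
    exact Commute.span_right (Set.forall_mem_range.mpr hA) _
      (PiTensorProduct.map_const_mem_span_range_linearEquiv a)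
  · intro hA g
    refine (Commute.span_left (Set.forall_mem_range.mpr fun σ => ?_) A hA).eq
    exact PiTensorProduct.permRep_mul_map σ fun _ => g.toLinearMap
end
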